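/- Every multiradial homogeneous distance on H^n is p-vertically symmetric for every p = 1,…,2n+1. -/

import Mathlib

noncomputable section

open Filter Set MeasureTheory
open scoped BigOperators Topology ENNReal MeasureTheory

/-- The Heisenberg group product on `ℝ^{2n+1}` (with its Euclidean structure),
in symplectic coordinates. -/
def hmul (n : ℕ) (x y : EuclideanSpace ℝ (Fin (2*n+1))) : EuclideanSpace ℝ (Fin (2*n+1)) :=
  WithLp.toLp 2 fun j =>
  x j + y j + (if (j : ℕ) = 2*n then
    (∑ i : Fin n, (x ⟨(i:ℕ), by omega⟩ * y ⟨(i:ℕ)+n, by omega⟩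
      - x ⟨(i:ℕ)+n, by omega⟩ * y ⟨(i:ℕ), by omega⟩)) / 2
  else 0)

/-- Intrinsic dilations of the Heisenberg group. -/
def hdil (n : ℕ) (t : ℝ) (x : EuclideanSpace ℝ (Fin (2*n+1))) :
    EuclideanSpace ℝ (Fin (2*n+1)) := WithLp.toLp 2 fun j =>
  if (j : ℕ) = 2*n then t^2 * x j else t * x j

/-- The horizontal layer `H_1`. -/
def H1set (n : ℕ) : Set (EuclideanSpace ℝ (Fin (2*n+1))) := {x | x ⟨2*n, by omega⟩ = 0}

/-- The vertical layer (center) `H_2`. -/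
def H2set (n : ℕ) : Set (EuclideanSpace ℝ (Fin (2*n+1))) :=
  {x | ∀ j : Fin (2*n+1), (j:ℕ) ≠ 2*n → x j = 0}

/-- The vertical unit vector `e_{2n+1}`. -/
def eLast (n : ℕ) : EuclideanSpace ℝ (Fin (2*n+1)) := EuclideanSpace.single ⟨2*n, by omega⟩ 1

/-- A homogeneous distance on the Heisenberg group. -/
structure IsHomDist (n : ℕ)
    (d : EuclideanSpace ℝ (Fin (2*n+1)) → EuclideanSpace ℝ (Fin (2*n+1)) → ℝ) : Prop where
  eq_zero_iff : ∀ x y, d x y = 0 ↔ x = y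
  symm : ∀ x y, d x y = d y x
  triangle : ∀ x y z, d x z ≤ d x y + d y z
  continuous : Continuous
    fun p : EuclideanSpace ℝ (Fin (2*n+1)) × EuclideanSpace ℝ (Fin (2*n+1)) => d p.1 p.2
  ball_mem_nhds : ∀ x : EuclideanSpace ℝ (Fin (2*n+1)), ∀ ε > (0:ℝ), {y | d x y < ε} ∈ nhds x
  leftInvariant : ∀ z x y, d (hmul n z x) (hmul n z y) = d x y
  homogeneous : ∀ t > (0:ℝ), ∀ x y, d (hdil n t x) (hdil n t y) = t * d x y

/-- A homogeneous subgroup: a closed subgroup invariant under all dilations. -/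
structure IsHomSubgroup (n : ℕ) (S : Set (EuclideanSpace ℝ (Fin (2*n+1)))) : Prop where
  zero_mem : (0 : EuclideanSpace ℝ (Fin (2*n+1))) ∈ S
  mul_mem : ∀ x ∈ S, ∀ y ∈ S, hmul n x y ∈ S
  neg_mem : ∀ x ∈ S, -x ∈ S
  dil_mem : ∀ t > (0:ℝ), ∀ x ∈ S, hdil n t x ∈ S
  closed : IsClosed S

/-- A vertical subgroup contains the center `H_2`. -/
def IsVertical (n : ℕ) (S : Set (EuclideanSpace ℝ (Fin (2*n+1)))) : Prop :=
  IsHomSubgroup n S ∧ H2set n ⊆ S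

/-- A horizontal subgroup is contained in `H_1`. -/
def IsHorizontal (n : ℕ) (S : Set (EuclideanSpace ℝ (Fin (2*n+1)))) : Prop :=
  IsHomSubgroup n S ∧ S ⊆ H1set n

/-- `H^n = W ⋊ V`. -/
def IsSemidirect (n : ℕ) (W V : Set (EuclideanSpace ℝ (Fin (2*n+1)))) : Prop :=
  (∀ x, ∃ w ∈ W, ∃ v ∈ V, x = hmul n w v) ∧ W ∩ V = {0}

/-- The norm `∥u_1 ∧ ⋯ ∧ u_m∥` of a wedge of vectors, computed as the square root of the
Gram determinant. -/
def wedgeNorm {m : ℕ} {ι : Type} [Fintype ι] [DecidableEq ι]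
    (u : ι → EuclideanSpace ℝ (Fin m)) : ℝ :=
  Real.sqrt (Matrix.det (Matrix.of fun i j => (inner ℝ (u i) (u j) : ℝ)))

/-- The concatenated family `(v_1,…,v_k, m_1,…,m_{2n-k}, e_{2n+1})`, whose wedge norm is
`∥V ∧ M∥`. -/
def catfam (n k : ℕ) (v : Fin k → EuclideanSpace ℝ (Fin (2*n+1)))
    (m : Fin (2*n-k) → EuclideanSpace ℝ (Fin (2*n+1))) :
    Fin (2*n+1) → EuclideanSpace ℝ (Fin (2*n+1)) := fun i =>
  if h : (i:ℕ) < k then v ⟨(i:ℕ), h⟩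
  else if h2 : (i:ℕ) < 2*n then m ⟨(i:ℕ) - k, by omega⟩
  else eLast n

/-- The projection `π_{H_1}` onto the horizontal layer. -/
def proj1 (n : ℕ) (x : EuclideanSpace ℝ (Fin (2*n+1))) : EuclideanSpace ℝ (Fin (2*n+1)) :=
  WithLp.toLp 2 fun j => if (j : ℕ) = 2*n then 0 else x j

/-- A multiradial homogeneous distance: `d(x,0) = θ(|π_{H_1}x|, |π_{H_2}x|)` with `θ`
continuous, monotone nondecreasing in each variable and coercive. -/
def IsMultiradial (n : ℕ)
    (d : EuclideanSpace ℝ (Fin (2*n+1)) → EuclideanSpace ℝ (Fin (2*n+1)) → ℝ) : Prop :=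
  ∃ θ : ℝ → ℝ → ℝ,
    ContinuousOn (fun p : ℝ × ℝ => θ p.1 p.2) (Set.Ici 0 ×ˢ Set.Ici 0) ∧
    (∀ b, MonotoneOn (fun a => θ a b) (Set.Ici 0)) ∧
    (∀ a, MonotoneOn (θ a) (Set.Ici 0)) ∧
    Tendsto (fun p : ℝ × ℝ => θ p.1 p.2) (cocompact (ℝ × ℝ)) atTop ∧
    ∀ x, d x 0 = θ ‖proj1 n x‖ |x ⟨2*n, by omega⟩|

/-- A `p`-vertically symmetric homogeneous distance: for `p ≥ 2` there is a family of
isometries of `H^n` fixing `H_2` pointwise and preserving `H_1`, acting transitively on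
`(p−1)`-dimensional subspaces of `H_1`, preserving the unit ball; moreover
`π_{H_1}(B(0,1)) = B(0,1) ∩ H_1 = {h ∈ H_1 : θ(|h|) ≤ r_0}` for a monotone nondecreasing
`θ` and some `r_0 > 0`. -/
def IsVertSym (n p : ℕ)
    (d : EuclideanSpace ℝ (Fin (2*n+1)) → EuclideanSpace ℝ (Fin (2*n+1)) → ℝ) : Prop :=
  p = 1 ∨ (2 ≤ p ∧
    ∃ O : Set (EuclideanSpace ℝ (Fin (2*n+1)) ≃ₗᵢ[ℝ] EuclideanSpace ℝ (Fin (2*n+1))),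
      (∀ T ∈ O, ∀ x ∈ H2set n, T x = x) ∧
      (∀ T ∈ O, (⇑T) '' H1set n = H1set n) ∧
      (∀ S1 S2 : Submodule ℝ (EuclideanSpace ℝ (Fin (2*n+1))),
        (S1 : Set (EuclideanSpace ℝ (Fin (2*n+1)))) ⊆ H1set n →
        (S2 : Set (EuclideanSpace ℝ (Fin (2*n+1)))) ⊆ H1set n →
        Module.finrank ℝ S1 = p - 1 → Module.finrank ℝ S2 = p - 1 →
          ∃ T ∈ O, (⇑T) '' (S1 : Set (EuclideanSpace ℝ (Fin (2*n+1))))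
            = (S2 : Set (EuclideanSpace ℝ (Fin (2*n+1))))) ∧
      (∀ T ∈ O, (⇑T) '' {x | d x 0 ≤ 1} = {x | d x 0 ≤ 1}) ∧
      (∃ θ : ℝ → ℝ, MonotoneOn θ (Set.Ici 0) ∧ ∃ r0 > (0:ℝ),
        (proj1 n) '' {x | d x 0 ≤ 1} = {x | d x 0 ≤ 1} ∩ H1set n ∧
        {x | d x 0 ≤ 1} ∩ H1set n = {x | x ∈ H1set n ∧ θ ‖x‖ ≤ r0}))


/-!
A multiradial distance sees a point only through `‖π_{H_1} x‖` and its vertical coordinate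
`⟪e_{2n+1}, x⟫`, and both are preserved by every linear isometry of `ℝ^{2n+1}` fixing the
vertical axis `H_2`. These isometries act transitively on horizontal subspaces of a given
dimension: complete orthonormal bases of the two subspaces together with `e_{2n+1}` to
orthonormal bases of the whole space and map one to the other. On `H_1` the distance from `0`
is `θ(‖h‖, 0)`, and monotonicity of `θ` in the vertical variable gives
`d(π_{H_1} x, 0) ≤ d(x, 0)`, hence `π_{H_1}(B(0,1)) = B(0,1) ∩ H_1`.
-/

open Module Submodule

section InnerProductSpace
variable {𝕜 V : Type*} [RCLike 𝕜] [NormedAddCommGroup V] [InnerProductSpace 𝕜 V]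

theorem Orthonormal.sum_elim {ι κ : Type*} {v : ι → V} {w : κ → V} (hv : Orthonormal 𝕜 v)
    (hw : Orthonormal 𝕜 w) (hvw : ∀ i j, inner 𝕜 (v i) (w j) = 0) :
    Orthonormal 𝕜 (Sum.elim v w) := by
  refine ⟨?_, ?_⟩
  · rintro (i | j)
    exacts [hv.1 i, hw.1 j]
  · rintro (i | j) (i' | j') h
    · exact hv.2 (fun e => h (congrArg Sum.inl e))
    · exact hvw i j'
    · rw [← inner_conj_symm]; simp [hvw i' j]
    · exact hw.2 (fun e => h (congrArg Sum.inr e))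

theorem OrthonormalBasis.span_range_coe {ι : Type*} [Fintype ι] {S : Submodule 𝕜 V}
    (b : OrthonormalBasis ι 𝕜 S) : span 𝕜 (range fun i => (b i : V)) = S := by
  rw [show (fun i => (b i : V)) = S.subtype ∘ b from rfl, range_comp, span_image,
    ← b.coe_toBasis, b.toBasis.span_eq, map_subtype_top]

theorem LinearIsometryEquiv.map_orthogonal_of_fixing {T : V ≃ₗᵢ[𝕜] V} {K : Submodule 𝕜 V}
    (hT : ∀ x ∈ K, T x = x) : Kᗮ.map T.toLinearMap = Kᗮ := by
  have hK : K.map T.toLinearMap = K := by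
    ext y
    constructor
    · rintro ⟨x, hx, rfl⟩; simpa [hT x hx] using hx
    · intro hy; exact ⟨y, hy, hT y hy⟩
  conv_rhs => rw [← hK]
  exact K.map_orthogonal_equiv T

variable [FiniteDimensional 𝕜 V]

theorem exists_linearIsometryEquiv_comp_eq_of_orthonormal {κ : Type*} [Fintype κ]
    {g₁ g₂ : κ → V} (h₁ : Orthonormal 𝕜 g₁) (h₂ : Orthonormal 𝕜 g₂) :
    ∃ T : V ≃ₗᵢ[𝕜] V, ∀ i, T (g₁ i) = g₂ i := by
  classical
  -- Index both bases by `κ ⊕ Fin m`; the padding `Fin m` is filled in by the basis extension.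
  set m := finrank 𝕜 V - Fintype.card κ
  have hcard : finrank 𝕜 V = Fintype.card (κ ⊕ Fin m) := by
    have := h₁.linearIndependent.fintype_card_le_finrank
    simp only [Fintype.card_sum, Fintype.card_fin]; omega
  have extend : ∀ g : κ → V, Orthonormal 𝕜 g →
      ∃ b : OrthonormalBasis (κ ⊕ Fin m) 𝕜 V, ∀ i, b (Sum.inl i) = g i := by
    intro g hg
    let e := Equiv.ofInjective _ (Sum.inl_injective (α := κ) (β := Fin m))
    have hrestr : (range Sum.inl).domRestrict (Sum.elim g 0) = g ∘ e.symm := by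
      funext ⟨_, i, rfl⟩
      simp [e]
    obtain ⟨b, hb⟩ := Orthonormal.exists_orthonormalBasis_extension_of_card_eq hcard
      (hrestr ▸ hg.comp _ e.symm.injective)
    exact ⟨b, fun i => hb _ (mem_range_self i)⟩
  obtain ⟨b₁, hb₁⟩ := extend g₁ h₁
  obtain ⟨b₂, hb₂⟩ := extend g₂ h₂
  exact ⟨b₁.equiv b₂ (Equiv.refl _), fun i => by simp [← hb₁, ← hb₂]⟩

theorem exists_linearIsometryEquiv_fixing_map_eq (K S₁ S₂ : Submodule 𝕜 V) (h₁ : S₁ ≤ Kᗮ)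
    (h₂ : S₂ ≤ Kᗮ) (hrank : finrank 𝕜 S₁ = finrank 𝕜 S₂) :
    ∃ T : V ≃ₗᵢ[𝕜] V, (∀ x ∈ K, T x = x) ∧ S₁.map T.toLinearMap = S₂ := by
  let bK := stdOrthonormalBasis 𝕜 K
  let b₁ := stdOrthonormalBasis 𝕜 S₁
  let b₂ := (stdOrthonormalBasis 𝕜 S₂).reindex (finCongr hrank.symm)
  have adapted : ∀ {S : Submodule 𝕜 V}, S ≤ Kᗮ → ∀ b : OrthonormalBasis (Fin (finrank 𝕜 S₁)) 𝕜 S,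
      Orthonormal 𝕜 (Sum.elim (fun i => (b i : V)) fun j => (bK j : V)) := fun {S} hS b =>
    (b.orthonormal.comp_linearIsometry S.subtypeₗᵢ).sum_elim
      (bK.orthonormal.comp_linearIsometry K.subtypeₗᵢ) fun i j =>
        inner_left_of_mem_orthogonal (bK j).2 (hS (b i).2)
  obtain ⟨T, hT⟩ := exists_linearIsometryEquiv_comp_eq_of_orthonormal
    (adapted h₁ b₁) (adapted h₂ b₂)
  refine ⟨T, fun x hx => ?_, ?_⟩
  · rw [← bK.span_range_coe] at hx
    exact LinearMap.eqOn_span (f := T.toLinearMap) (g := LinearMap.id)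
      (by rintro _ ⟨j, rfl⟩; exact hT (Sum.inr j)) hx
  · rw [← b₁.span_range_coe, ← b₂.span_range_coe, map_span, ← range_comp]
    exact congrArg _ (congrArg _ (funext fun i => hT (Sum.inl i)))

end InnerProductSpace

section Heisenberg

variable {n : ℕ}

theorem inner_eLast (x : EuclideanSpace ℝ (Fin (2*n+1))) :
    inner ℝ (eLast n) x = x ⟨2*n, by omega⟩ := by
  simp [eLast, EuclideanSpace.inner_single_left]

theorem proj1_eq_sub (x : EuclideanSpace ℝ (Fin (2*n+1))) :
    proj1 n x = x - x ⟨2*n, by omega⟩ • eLast n := by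
  ext j
  rcases eq_or_ne j ⟨2*n, by omega⟩ with rfl | hj
  · simp [proj1, eLast]
  · simp [proj1, eLast, hj, Fin.ext_iff.not.mp hj]

theorem proj1_mem_H1set (x : EuclideanSpace ℝ (Fin (2*n+1))) : proj1 n x ∈ H1set n := by
  simp [proj1, H1set]

theorem proj1_eq_self {x : EuclideanSpace ℝ (Fin (2*n+1))} (hx : x ∈ H1set n) :
    proj1 n x = x := by
  rw [proj1_eq_sub, show x ⟨2*n, by omega⟩ = 0 from hx, zero_smul, sub_zero]

theorem coe_span_eLast :
    ((ℝ ∙ eLast n : Submodule ℝ (EuclideanSpace ℝ (Fin (2*n+1)))) : Set _) = H2set n := by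
  ext x
  simp only [SetLike.mem_coe, mem_span_singleton, H2set, mem_ofPred_eq]
  constructor
  · rintro ⟨a, rfl⟩ j hj
    simp [eLast, Fin.ext_iff, hj]
  · intro hx
    refine ⟨x ⟨2*n, by omega⟩, ?_⟩
    ext j
    rcases eq_or_ne j ⟨2*n, by omega⟩ with rfl | hj
    · simp [eLast]
    · simp [eLast, hj, hx j (Fin.ext_iff.not.mp hj)]

theorem eLast_mem_H2set : eLast n ∈ H2set n :=
  coe_span_eLast (n := n) ▸ mem_span_singleton_self (eLast n)

theorem coe_orthogonal_span_eLast :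
    (((ℝ ∙ eLast n)ᗮ : Submodule ℝ (EuclideanSpace ℝ (Fin (2*n+1)))) : Set _) = H1set n := by
  ext x
  simp [mem_orthogonal_singleton_iff_inner_right, inner_eLast, H1set]

section Fixing

variable {T : EuclideanSpace ℝ (Fin (2*n+1)) ≃ₗᵢ[ℝ] EuclideanSpace ℝ (Fin (2*n+1))}

theorem apply_last_of_fixing (hT : T (eLast n) = eLast n) (x : EuclideanSpace ℝ (Fin (2*n+1))) :
    T x ⟨2*n, by omega⟩ = x ⟨2*n, by omega⟩ := by
  have h := T.inner_map_map (eLast n) x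
  rwa [hT, inner_eLast, inner_eLast] at h

theorem proj1_map_of_fixing (hT : T (eLast n) = eLast n) (x : EuclideanSpace ℝ (Fin (2*n+1))) :
    proj1 n (T x) = T (proj1 n x) := by
  rw [proj1_eq_sub, proj1_eq_sub, map_sub, map_smul, hT, apply_last_of_fixing hT]

theorem image_H1set_of_fixing (hT : ∀ x ∈ H2set n, T x = x) : T '' H1set n = H1set n := by
  have hK : ∀ x ∈ (ℝ ∙ eLast n), T x = x := fun x hx =>
    hT x (coe_span_eLast (n := n) ▸ hx)
  rw [← coe_orthogonal_span_eLast, ← T.coe_toLinearEquiv, ← LinearEquiv.coe_coe, ← map_coe,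
    T.map_orthogonal_of_fixing hK]

end Fixing

theorem exists_fixing_H2set_image_eq (S₁ S₂ : Submodule ℝ (EuclideanSpace ℝ (Fin (2*n+1))))
    (h₁ : (S₁ : Set _) ⊆ H1set n) (h₂ : (S₂ : Set _) ⊆ H1set n)
    (hrank : finrank ℝ S₁ = finrank ℝ S₂) :
    ∃ T : EuclideanSpace ℝ (Fin (2*n+1)) ≃ₗᵢ[ℝ] EuclideanSpace ℝ (Fin (2*n+1)),
      (∀ x ∈ H2set n, T x = x) ∧ T '' S₁ = S₂ := by
  rw [← coe_orthogonal_span_eLast] at h₁ h₂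
  obtain ⟨T, hfix, hmap⟩ := exists_linearIsometryEquiv_fixing_map_eq _ S₁ S₂ h₁ h₂ hrank
  refine ⟨T, fun x hx => hfix x (by rwa [← SetLike.mem_coe, coe_span_eLast]), ?_⟩
  rw [← hmap, map_coe]
  rfl

namespace IsMultiradial

variable {d : EuclideanSpace ℝ (Fin (2*n+1)) → EuclideanSpace ℝ (Fin (2*n+1)) → ℝ}
  (hmr : IsMultiradial n d)
include hmr

theorem dist_zero_map_eq
    {T : EuclideanSpace ℝ (Fin (2*n+1)) ≃ₗᵢ[ℝ] EuclideanSpace ℝ (Fin (2*n+1))}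
    (hT : T (eLast n) = eLast n) (x : EuclideanSpace ℝ (Fin (2*n+1))) : d (T x) 0 = d x 0 := by
  obtain ⟨θ, -, -, -, -, hθ⟩ := hmr
  rw [hθ, hθ, proj1_map_of_fixing hT, T.norm_map, apply_last_of_fixing hT]

theorem dist_zero_proj1_le (x : EuclideanSpace ℝ (Fin (2*n+1))) : d (proj1 n x) 0 ≤ d x 0 := by
  obtain ⟨θ, -, -, hmono, -, hθ⟩ := hmr
  rw [hθ, hθ, proj1_eq_self (proj1_mem_H1set x),
    show proj1 n x ⟨2*n, by omega⟩ = 0 from proj1_mem_H1set x, abs_zero]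
  exact hmono _ self_mem_Ici (mem_Ici.2 (abs_nonneg _)) (abs_nonneg _)

theorem exists_monotoneOn_dist_zero_eq :
    ∃ φ : ℝ → ℝ, MonotoneOn φ (Ici 0) ∧ ∀ x ∈ H1set n, d x 0 = φ ‖x‖ := by
  obtain ⟨θ, -, hmono, -, -, hθ⟩ := hmr
  refine ⟨fun r => θ r 0, hmono 0, fun x hx => ?_⟩
  rw [hθ, proj1_eq_self hx, show x ⟨2*n, by omega⟩ = 0 from hx, abs_zero]

theorem image_sublevel_eq
    {T : EuclideanSpace ℝ (Fin (2*n+1)) ≃ₗᵢ[ℝ] EuclideanSpace ℝ (Fin (2*n+1))}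
    (hT : T (eLast n) = eLast n) (r : ℝ) : T '' {x | d x 0 ≤ r} = {x | d x 0 ≤ r} := by
  ext y
  rw [T.image_eq_preimage_symm, mem_preimage, mem_ofPred_eq, mem_ofPred_eq,
    ← hmr.dist_zero_map_eq hT, T.apply_symm_apply]

theorem image_proj1_sublevel_eq (r : ℝ) :
    proj1 n '' {x | d x 0 ≤ r} = {x | d x 0 ≤ r} ∩ H1set n := by
  ext y
  constructor
  · rintro ⟨x, hx, rfl⟩
    exact ⟨(hmr.dist_zero_proj1_le x).trans hx, proj1_mem_H1set x⟩
  · rintro ⟨hy, hyH⟩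
    exact ⟨y, hy, proj1_eq_self hyH⟩

end IsMultiradial

end Heisenberg

theorem stmt_18_general (n : ℕ)
    (d : EuclideanSpace ℝ (Fin (2*n+1)) → EuclideanSpace ℝ (Fin (2*n+1)) → ℝ)
    (hmr : IsMultiradial n d) :
    ∀ p : ℕ, 1 ≤ p → p ≤ 2*n+1 → IsVertSym n p d := by
  intro p hp _
  rcases hp.eq_or_lt with rfl | hp
  · exact Or.inl rfl
  obtain ⟨φ, hφ, hdφ⟩ := hmr.exists_monotoneOn_dist_zero_eq
  refine Or.inr ⟨hp, {T | ∀ x ∈ H2set n, T x = x}, fun T hT => hT,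
    fun T hT => image_H1set_of_fixing hT,
    fun S₁ S₂ h₁ h₂ hr₁ hr₂ => exists_fixing_H2set_image_eq S₁ S₂ h₁ h₂ (hr₁.trans hr₂.symm),
    fun T hT => hmr.image_sublevel_eq (hT _ eLast_mem_H2set) 1,
    φ, hφ, 1, one_pos, hmr.image_proj1_sublevel_eq 1, ?_⟩
  ext x
  simp only [mem_inter_iff, mem_ofPred_eq]
  exact ⟨fun ⟨hx, hxH⟩ => ⟨hxH, hdφ x hxH ▸ hx⟩, fun ⟨hxH, hx⟩ => ⟨(hdφ x hxH).symm ▸ hx, hxH⟩⟩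

/-- Every multiradial homogeneous distance on `H^n` is `p`-vertically symmetric for every
`p = 1,…,2n+1`. -/
theorem stmt_18 (n : ℕ)
    (d : EuclideanSpace ℝ (Fin (2*n+1)) → EuclideanSpace ℝ (Fin (2*n+1)) → ℝ)
    (hd : IsHomDist n d) (hmr : IsMultiradial n d) :
    ∀ p : ℕ, 1 ≤ p → p ≤ 2*n+1 → IsVertSym n p d :=
  stmt_18_general n d hmr
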